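/- Let $X$ be a topological space such that every real-valued Baire-one function on $X$ is functionally $F_\sigma$-measurable for perfectly normal targets, let $(Y_n : n \in \omega)$ be a sequentially absorbing covering of a sequential space $Y$ by closed perfectly normal subspaces. Then every Baire-one map $f : X \to Y$ is functionally $F_\sigma$-measurable, i.e., $\mathrm{B}_1(X,Y) \subseteq \mathrm{K}_1(X,Y)$. -/

import Mathlib

/-!
It suffices that `Y` be perfectly normal, i.e. that every closed `F ⊆ Y` be the zero set of a
continuous `Y → [0, 1]`. Such a function is built piece by piece: a function on `Yₙ` with zero set
`F ∩ Yₙ` is extended by Tietze to the perfectly normal `Yₙ₊₁` so as to vanish on `F`, and then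
replaced by its maximum with `w * p`, where `w`, `p` vanish exactly on `F` and on `Yₙ`. The
functions agree on the pieces, and their union is continuous because `Y` is sequential and every
convergent sequence lies in a single `Yₖ`.
-/

universe u v

open Filter Topology Set

/-- `f` is of the first Baire class: a pointwise limit of continuous maps. -/
def BaireOne {X Y : Type*} [TopologicalSpace X] [TopologicalSpace Y]
    (f : X → Y) : Prop :=
  ∃ g : ℕ → X → Y, (∀ n, Continuous (g n)) ∧
    ∀ x, Tendsto (fun n => g n x) atTop (𝓝 (f x))

/-- A zero set: the preimage of `{0}` under a continuous real-valued function. -/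
def IsZeroSet {X : Type*} [TopologicalSpace X] (A : Set X) : Prop :=
  ∃ h : X → ℝ, Continuous h ∧ A = h ⁻¹' {0}

/-- `f` is functionally `F_σ`-measurable: preimages of open sets are countable
unions of zero sets. -/
def FunctionallyFSigmaMeasurable {X Y : Type*} [TopologicalSpace X]
    [TopologicalSpace Y] (f : X → Y) : Prop :=
  ∀ V : Set Y, IsOpen V →
    ∃ Z : ℕ → Set X, (∀ n, IsZeroSet (Z n)) ∧ f ⁻¹' V = ⋃ n, Z n

def IsZeroSetFunctionOn {Y : Type*} [TopologicalSpace Y] (z : Y → ℝ) (F S : Set Y) : Prop :=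
  ContinuousOn z S ∧ MapsTo z S (Icc 0 1) ∧ ∀ y ∈ S, z y = 0 ↔ y ∈ F

namespace IsZeroSetFunctionOn

variable {Y : Type*} [TopologicalSpace Y] {z : Y → ℝ} {F S : Set Y}

theorem congr {h : Y → ℝ} (hz : IsZeroSetFunctionOn z F S) (hhz : EqOn h z S) :
    IsZeroSetFunctionOn h F S :=
  ⟨hz.1.congr hhz, hz.2.1.congr hhz.symm, fun y hy => hhz hy ▸ hz.2.2 y hy⟩

theorem exists_extension_eqOn_zero [NormalSpace Y] (hz : IsZeroSetFunctionOn z F S)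
    (hS : IsClosed S) (hF : IsClosed F) :
    ∃ E : C(Y, ℝ), (∀ y, E y ∈ Icc 0 1) ∧ EqOn E z S ∧ EqOn E 0 F := by
  obtain ⟨hzc, hz01, hzF⟩ := hz
  set g := S.indicator z
  have hgS : EqOn g z S := fun y hy => indicator_of_mem hy z
  have hgF : EqOn g 0 F := fun y hyF => by
    by_cases hyS : y ∈ S
    · rw [hgS hyS, (hzF y hyS).2 hyF, Pi.zero_apply]
    · exact indicator_of_notMem hyS z
  have hg01 (y : Y) : g y ∈ Icc 0 1 := by
    by_cases hyS : y ∈ S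
    · exact hgS hyS ▸ hz01 hyS
    · simp [g, indicator_of_notMem hyS]
  have hgc : ContinuousOn g (S ∪ F) :=
    (hzc.congr hgS).union_of_isClosed (continuousOn_const.congr hgF) hS hF
  obtain ⟨E, hE01, hEg⟩ := ContinuousMap.exists_restrict_eq_forall_mem_of_closed
    ⟨(S ∪ F).domRestrict g, hgc.domRestrict⟩ (fun y => hg01 y) (nonempty_Icc.2 zero_le_one)
    (hS.union hF)
  have hEg' : EqOn E g (S ∪ F) := fun y hy => DFunLike.congr_fun hEg ⟨y, hy⟩
  exact ⟨E, hE01, fun y hy => (hEg' (.inl hy)).trans (hgS hy),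
    fun y hy => (hEg' (.inr hy)).trans (hgF hy)⟩

theorem exists_extension [PerfectlyNormalSpace Y] (hz : IsZeroSetFunctionOn z F S)
    (hS : IsClosed S) (hF : IsClosed F) :
    ∃ u : C(Y, ℝ), IsZeroSetFunctionOn u F univ ∧ EqOn u z S := by
  obtain ⟨E, hE01, hES, hEF⟩ := hz.exists_extension_eqOn_zero hS hF
  obtain ⟨w, hwF, hw01⟩ := perfectlyNormalSpace_iff_forall_isClosed_preimage_zero.1 ‹_› F hF
  obtain ⟨p, hpS, hp01⟩ := perfectlyNormalSpace_iff_forall_isClosed_preimage_zero.1 ‹_› S hS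
  replace hwF (y : Y) : w y = 0 ↔ y ∈ F := by rw [hwF]; rfl
  replace hpS (y : Y) : p y = 0 ↔ y ∈ S := by rw [hpS]; rfl
  have hwp (y : Y) : 0 ≤ w y * p y := mul_nonneg (hw01 y).1 (hp01 y).1
  -- `w * p` vanishes on `S`, and off `S` exactly on `F`
  refine ⟨E ⊔ w * p, ⟨(E ⊔ w * p).continuous.continuousOn, fun y _ => ?_, fun y _ => ?_⟩,
    fun y hy => ?_⟩
  · exact ⟨le_sup_of_le_right (hwp y),
      sup_le (hE01 y).2 (mul_le_one₀ (hw01 y).2 (hp01 y).1 (hp01 y).2)⟩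
  · show max (E y) (w y * p y) = 0 ↔ y ∈ F
    constructor
    · intro h0
      have hE0 : E y = 0 := le_antisymm (h0 ▸ le_max_left _ _) (hE01 y).1
      have hwp0 : w y * p y = 0 := le_antisymm (h0 ▸ le_max_right _ _) (hwp y)
      rcases mul_eq_zero.1 hwp0 with hw0 | hp0
      · exact (hwF y).1 hw0
      · have hyS := (hpS y).1 hp0
        exact (hz.2.2 y hyS).1 (hES hyS ▸ hE0)
    · intro hyF
      rw [hEF hyF, (hwF y).2 hyF, zero_mul, Pi.zero_apply, max_self]
  · have hpy : p y = 0 := (hpS y).2 hy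
    show max (E y) (w y * p y) = z y
    rw [hpy, mul_zero, hES hy]
    exact max_eq_left (hz.2.1 hy).1

theorem exists_extension_of_subset {A B : Set Y} [PerfectlyNormalSpace B]
    (hz : IsZeroSetFunctionOn z F A) (hAB : A ⊆ B) (hA : IsClosed A) (hF : IsClosed F) :
    ∃ u : Y → ℝ, IsZeroSetFunctionOn u F B ∧ EqOn u z A := by
  have hzB : IsZeroSetFunctionOn (z ∘ (↑) : B → ℝ) ((↑) ⁻¹' F) ((↑) ⁻¹' A) :=
    ⟨hz.1.comp continuous_subtype_val.continuousOn (mapsTo_preimage _ _),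
      fun _ hy => hz.2.1 hy, fun y hy => hz.2.2 y hy⟩
  obtain ⟨v, hv, hvz⟩ := hzB.exists_extension (hA.preimage continuous_subtype_val)
    (hF.preimage continuous_subtype_val)
  have hext (y : B) : Function.extend ((↑) : B → Y) v 0 (y : Y) = v y :=
    Subtype.val_injective.extend_apply v 0 y
  refine ⟨Function.extend ((↑) : B → Y) v 0, ⟨?_, fun y hy => ?_, fun y hy => ?_⟩, fun y hy => ?_⟩
  · rw [continuousOn_iff_continuous_domRestrict]
    convert v.continuous using 1
    exact funext hext
  · exact hext ⟨y, hy⟩ ▸ hv.2.1 (mem_univ _)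
  · exact hext ⟨y, hy⟩ ▸ hv.2.2 _ (mem_univ _)
  · exact (hext ⟨y, hAB hy⟩).trans (hvz hy)

end IsZeroSetFunctionOn

theorem exists_eqOn_of_eqOn_succ {α β : Type*} {S : ℕ → Set α} (hS : Monotone S)
    (hcover : ⋃ n, S n = univ) {z : ℕ → α → β} (hz : ∀ n, EqOn (z (n + 1)) (z n) (S n)) :
    ∃ h : α → β, ∀ n, EqOn h (z n) (S n) := by
  have hle {m n : ℕ} (hmn : m ≤ n) : EqOn (z n) (z m) (S m) := by
    induction hmn with
    | refl => exact eqOn_refl _ _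
    | step hmk ih => exact fun y hy => (hz _ (hS hmk hy)).trans (ih hy)
  choose idx hidx using iUnion_eq_univ_iff.1 hcover
  exact ⟨fun y => z (idx y) y, fun n y hy =>
    (hle (le_max_right n (idx y)) (hidx y)).symm.trans (hle (le_max_left n (idx y)) hy)⟩

theorem continuous_of_continuousOn_of_forall_tendsto {X Z : Type*} [TopologicalSpace X]
    [SequentialSpace X] [TopologicalSpace Z] {S : ℕ → Set X} (hS : ∀ n, IsClosed (S n))
    (habs : ∀ (u : ℕ → X) (x : X), Tendsto u atTop (𝓝 x) → ∃ k, ∀ n, u n ∈ S k)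
    {h : X → Z} (hh : ∀ n, ContinuousOn h (S n)) : Continuous h := by
  refine continuous_iff_seqContinuous.2 fun u x hux => ?_
  obtain ⟨k, hk⟩ := habs u x hux
  have hx : x ∈ S k := (hS k).mem_of_tendsto hux (.of_forall hk)
  exact (hh k x hx).tendsto.comp (tendsto_nhdsWithin_iff.2 ⟨hux, .of_forall hk⟩)

section

variable {Y : Type*} [TopologicalSpace Y] {S : ℕ → Set Y}

theorem exists_seq_isZeroSetFunctionOn (hS : Monotone S) (hclosed : ∀ n, IsClosed (S n))
    (hpn : ∀ n, PerfectlyNormalSpace (S n)) {F : Set Y} (hF : IsClosed F) :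
    ∃ z : ℕ → Y → ℝ, ∀ n, IsZeroSetFunctionOn (z n) F (S n) ∧ EqOn (z (n + 1)) (z n) (S n) := by
  have hstep (n : ℕ) (z : Y → ℝ) (hz : IsZeroSetFunctionOn z F (S n)) :
      ∃ z', IsZeroSetFunctionOn z' F (S (n + 1)) ∧ EqOn z' z (S n) :=
    have := hpn (n + 1)
    hz.exists_extension_of_subset (hS n.le_succ) (hclosed n) hF
  choose next hnext hnext_eq using hstep
  have := hpn 0
  obtain ⟨z₀, hz₀, -⟩ := IsZeroSetFunctionOn.exists_extension_of_subset
    (z := 0) ⟨continuousOn_empty _, mapsTo_empty _ _, fun _ h => h.elim⟩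
    (empty_subset (S 0)) isClosed_empty hF
  let seq (n : ℕ) : {z // IsZeroSetFunctionOn z F (S n)} :=
    Nat.rec ⟨z₀, hz₀⟩ (fun n z => ⟨next n z.1 z.2, hnext n z.1 z.2⟩) n
  exact ⟨fun n => (seq n).1, fun n => ⟨(seq n).2, hnext_eq n _ _⟩⟩

theorem perfectlyNormalSpace_of_sequentiallyAbsorbing [SequentialSpace Y]
    (hcover : ⋃ n, S n = univ) (hclosed : ∀ n, IsClosed (S n)) (hS : Monotone S)
    (habs : ∀ (u : ℕ → Y) (y : Y), Tendsto u atTop (𝓝 y) → ∃ k, ∀ n, u n ∈ S k)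
    (hpn : ∀ n, PerfectlyNormalSpace (S n)) : PerfectlyNormalSpace Y := by
  refine perfectlyNormalSpace_iff_forall_isClosed_preimage_zero.2 fun F hF => ?_
  obtain ⟨z, hz⟩ := exists_seq_isZeroSetFunctionOn hS hclosed hpn hF
  obtain ⟨h, hhz⟩ := exists_eqOn_of_eqOn_succ hS hcover fun n => (hz n).2
  have hh (n : ℕ) : IsZeroSetFunctionOn h F (S n) := (hz n).1.congr (hhz n)
  refine ⟨⟨h, continuous_of_continuousOn_of_forall_tendsto hclosed habs fun n => (hh n).1⟩,
    ?_, fun y => ?_⟩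
  · ext y
    obtain ⟨n, hn⟩ := iUnion_eq_univ_iff.1 hcover y
    exact ((hh n).2.2 y hn).symm
  · obtain ⟨n, hn⟩ := iUnion_eq_univ_iff.1 hcover y
    exact (hh n).2.1 hn

end

theorem baireOne_subset_functionallyFSigma
    {X : Type u} {Y : Type v} [TopologicalSpace X] [TopologicalSpace Y]
    [SequentialSpace Y]
    (hX : ∀ (Z : Type v) [TopologicalSpace Z], PerfectlyNormalSpace Z →
      ∀ g : X → Z, BaireOne g → FunctionallyFSigmaMeasurable g)
    (Yn : ℕ → Set Y)
    (hcover : (⋃ n, Yn n) = Set.univ)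
    (hclosed : ∀ n, IsClosed (Yn n))
    (hmono : Monotone Yn)
    (habs : ∀ (u : ℕ → Y) (y : Y), Tendsto u atTop (𝓝 y) →
      ∃ k, ∀ n, u n ∈ Yn k)
    (hpn : ∀ n, PerfectlyNormalSpace (Yn n)) :
    ∀ f : X → Y, BaireOne f → FunctionallyFSigmaMeasurable f :=
  hX Y (perfectlyNormalSpace_of_sequentiallyAbsorbing hcover hclosed hmono habs hpn)
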